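/- Let Γ^k_{ij} ∈ k[[x^1,…,x^d]] (1 ≤ i,j,k ≤ d) satisfy Γ^k_{ij} = Γ^k_{ji}. Then for all homogeneous f, g ∈ 𝒜, (−1)^{|f|} Σ_{i,j,k} Γ^k_{ij} ψ_k (∂f/∂ψ_j)(∂g/∂ψ_i) + (−1)^{|f||g|+|g|} Σ_{i,j,k} Γ^k_{ij} ψ_k (∂g/∂ψ_j)(∂f/∂ψ_i) = 0. -/

import Mathlib

open Finset

noncomputable section
namespace Glob

variable {d : ℕ} {k : Type*} [CommRing k] [Algebra ℚ k]

/-- The power series ring `k[[x^1,…,x^d,y^1,…,y^d]]`; `Sum.inl i` is `x^i`, `Sum.inr i` is `y^i`. -/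
abbrev PS (d : ℕ) (k : Type*) [CommRing k] := MvPowerSeries (Fin d ⊕ Fin d) k

/-- The algebra `𝒜 = k[[x,y]] ⊗ Λ(ψ) ⊗ Λ(η)`: an element is encoded by its family of
power-series coefficients at the exterior monomials `ψ_S η_T`. -/
abbrev A (d : ℕ) (k : Type*) [CommRing k] := Finset (Fin d) → Finset (Fin d) → PS d k

def mkPS (f : ((Fin d ⊕ Fin d) →₀ ℕ) → k) : PS d k := f

def cf (m : (Fin d ⊕ Fin d) →₀ ℕ) (φ : PS d k) : k := MvPowerSeries.coeff m φ

/-- Koszul sign for merging two sorted exterior monomials. -/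
def msign (S T : Finset (Fin d)) : ℤ := (-1) ^ (((S ×ˢ T)).filter (fun p => p.2 < p.1)).card

/-- Multiplication in `𝒜` (monomials ordered with all ψ's before all η's). -/
def amul (f g : A d k) : A d k := fun S T =>
  ∑ S1 ∈ S.powerset, ∑ T1 ∈ T.powerset,
    (msign S1 (S \ S1) * msign T1 (T \ T1) * (-1) ^ (T1.card * (S \ S1).card)) •
      (f S1 T1 * g (S \ S1) (T \ T1))

/-- Partial derivative of a formal power series. -/
def pderivPS (j : Fin d ⊕ Fin d) (φ : PS d k) : PS d k :=
  mkPS fun m => (m j + 1 : ℕ) • cf (m + Finsupp.single j 1) φ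

/-- The even derivation `∂/∂x^i`. -/
def dX (i : Fin d) (f : A d k) : A d k := fun S T => pderivPS (Sum.inl i) (f S T)

/-- The even derivation `∂/∂y^i`. -/
def dY (i : Fin d) (f : A d k) : A d k := fun S T => pderivPS (Sum.inr i) (f S T)

/-- The odd derivation `∂/∂ψ_i`. -/
def dPsi (i : Fin d) (f : A d k) : A d k := fun S T =>
  if i ∈ S then 0 else ((-1 : ℤ) ^ (S.filter (· < i)).card) • f (insert i S) T

/-- The odd derivation `∂/∂η^i`. -/
def dEta (i : Fin d) (f : A d k) : A d k := fun S T =>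
  if i ∈ T then 0 else ((-1 : ℤ) ^ (S.card + (T.filter (· < i)).card)) • f S (insert i T)

/-- The generator `ψ_i`. -/
def psiGen (i : Fin d) : A d k := fun S T => if S = {i} ∧ T = ∅ then 1 else 0

/-- The generator `η^i`. -/
def etaGen (i : Fin d) : A d k := fun S T => if S = ∅ ∧ T = {i} then 1 else 0

/-- A power series viewed as an element of `𝒜`. -/
def scalarA (φ : PS d k) : A d k := fun S T => if S = ∅ ∧ T = ∅ then φ else 0

/-- Total `y`-degree of a power-series monomial. -/
def ydeg (m : (Fin d ⊕ Fin d) →₀ ℕ) : ℕ := ∑ i : Fin d, m (Sum.inr i)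

/-- The projection `σ` onto the part of degree `0` in the `y`'s and the `η`'s. -/
def sigmaOp (f : A d k) : A d k := fun S T =>
  if T = (∅ : Finset (Fin d)) then mkPS (fun m => if ydeg m = 0 then cf m (f S T) else 0) else 0

/-- `δ = Σ_i η^i · ∂/∂y^i`. -/
def deltaOp (f : A d k) : A d k := ∑ i : Fin d, amul (etaGen i) (dY i f)

/-- `δ*`, acting as `(1/(p+q)) Σ_a y^a · ∂/∂η^a` on the component of `y`-degree `p`
and `η`-degree `q` (and by `0` when `p = q = 0`). -/
def deltaStar (f : A d k) : A d k := fun S T =>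
  mkPS fun m =>
    if ydeg m + T.card = 0 then 0
    else ((ydeg m + T.card : ℚ))⁻¹ •
      cf m ((∑ a : Fin d, amul (scalarA (MvPowerSeries.X (Sum.inr a))) (dEta a f)) S T)

/-- Projection onto the component of total exterior (`ψ` and `η`) degree `n`. -/
def homogPart (n : ℕ) (f : A d k) : A d k :=
  fun S T => if S.card + T.card = n then f S T else 0

/-- The vertical Schouten bracket on homogeneous elements of degrees `m`, `n`. -/
def vbrHom (m n : ℕ) (f g : A d k) : A d k :=
  ((-1 : ℤ) ^ m) • (∑ i : Fin d, amul (dY i f) (dPsi i g)) +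
  ((-1 : ℤ) ^ (m * n + n)) • (∑ i : Fin d, amul (dY i g) (dPsi i f))

/-- The vertical Schouten bracket, extended bilinearly. -/
def vbr (f g : A d k) : A d k :=
  ∑ m ∈ Finset.range (2 * d + 1), ∑ n ∈ Finset.range (2 * d + 1),
    vbrHom m n (homogPart m f) (homogPart n g)

/-- The Schouten bracket (using `∂/∂x^i`) on homogeneous elements. -/
def sbrHom (m n : ℕ) (f g : A d k) : A d k :=
  ((-1 : ℤ) ^ m) • (∑ i : Fin d, amul (dX i f) (dPsi i g)) +
  ((-1 : ℤ) ^ (m * n + n)) • (∑ i : Fin d, amul (dX i g) (dPsi i f))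

/-- The Schouten bracket, extended bilinearly. -/
def sbr (f g : A d k) : A d k :=
  ∑ m ∈ Finset.range (2 * d + 1), ∑ n ∈ Finset.range (2 * d + 1),
    sbrHom m n (homogPart m f) (homogPart n g)

/-- The de Rham differential `d = Σ_i η^i · ∂/∂x^i`. -/
def dOp (f : A d k) : A d k := ∑ i : Fin d, amul (etaGen i) (dX i f)

/-- The element `Γ = −Σ_{i,j,k} η^i Γ^k_{ij} y^j ψ_k` built from Christoffel symbols. -/
def GammaEl (Γc : Fin d → Fin d → Fin d → PS d k) : A d k :=
  - ∑ i : Fin d, ∑ j : Fin d, ∑ k' : Fin d,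
      amul (scalarA (Γc k' i j * MvPowerSeries.X (Sum.inr j)))
        (amul (etaGen i) (psiGen k'))

/-- The connection `∇ = d + [Γ,−]`. -/
def nabla (Γc : Fin d → Fin d → Fin d → PS d k) (f : A d k) : A d k :=
  dOp f + vbr (GammaEl Γc) f

/-- The curvature element `R = d(Γ) + ½[Γ,Γ]`. -/
def curv (Γc : Fin d → Fin d → Fin d → PS d k) : A d k :=
  dOp (GammaEl Γc) + (2 : ℚ)⁻¹ • vbr (GammaEl Γc) (GammaEl Γc)

/-- The Fedosov differential `D = ∇ − δ + [A,−]`. -/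
def Dop (Γc : Fin d → Fin d → Fin d → PS d k) (Aa : A d k) (f : A d k) : A d k :=
  nabla Γc f - deltaOp f + vbr Aa f

/-- `f` is homogeneous of `η`-degree `q`. -/
def EtaHomog (q : ℕ) (f : A d k) : Prop := ∀ S T, T.card ≠ q → f S T = 0

/-- `f` is homogeneous of total exterior degree `n`. -/
def Homog (n : ℕ) (f : A d k) : Prop := ∀ S T, S.card + T.card ≠ n → f S T = 0

/-- The Christoffel symbols depend only on the `x` variables. -/
def XOnly (Γc : Fin d → Fin d → Fin d → PS d k) : Prop :=
  ∀ i j k' m, ydeg m ≠ 0 → cf m (Γc k' i j) = 0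

/-- Symmetry of the Christoffel symbols in the lower indices. -/
def GSymm (Γc : Fin d → Fin d → Fin d → PS d k) : Prop :=
  ∀ i j k', Γc k' i j = Γc k' j i

/-- Membership in the subalgebra `𝒯 = k[[x]] ⊗ Λ(ψ)`: no `η`'s and no `y`'s. -/
def InT (f : A d k) : Prop :=
  (∀ S T, T ≠ (∅ : Finset (Fin d)) → f S T = 0) ∧
  (∀ S T m, ydeg m ≠ 0 → cf m (f S T) = 0)


end Glob

/-!
Since `∂/∂ψ_j` lowers the degree by one, `(∂g/∂ψ_j)(∂f/∂ψ_i) = (−1)^{(|f|−1)(|g|−1)} (∂f/∂ψ_i)(∂g/∂ψ_j)`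
by graded commutativity, and the symmetry `Γ^k_{ij} = Γ^k_{ji}` lets us exchange `i` and `j`.
So the second sum is `(−1)^{(|f|−1)(|g|−1)}` times the first, and the total sign
`(−1)^{|f|} + (−1)^{|f||g|+|g|+(|f|−1)(|g|−1)} = (−1)^{|f|} + (−1)^{|f|−1}` vanishes when
`|f|, |g| ≥ 1`; if `|f| = 0` or `|g| = 0`, both sums vanish outright.
-/

namespace Glob

variable {d : ℕ} {k : Type*} [CommRing k]

lemma card_filter_lt_add_card_filter_lt_swap {α : Type*} [LinearOrder α] {S T : Finset α}
    (h : Disjoint S T) :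
    #{p ∈ S ×ˢ T | p.2 < p.1} + #{p ∈ T ×ˢ S | p.2 < p.1} = #S * #T := by
  have swap : #{p ∈ T ×ˢ S | p.2 < p.1} = #{p ∈ S ×ˢ T | ¬ p.2 < p.1} := by
    refine card_nbij' Prod.swap Prod.swap ?_ ?_ (fun _ _ => rfl) (fun _ _ => rfl)
    · intro p hp
      simp only [coe_filter, mem_product, Set.mem_ofPred_eq, Prod.fst_swap, Prod.snd_swap,
        not_lt] at hp ⊢
      exact ⟨hp.1.symm, hp.2.le⟩
    · intro p hp
      simp only [coe_filter, mem_product, Set.mem_ofPred_eq, Prod.fst_swap, Prod.snd_swap,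
        not_lt] at hp ⊢
      exact ⟨hp.1.symm, hp.2.lt_of_ne fun he => disjoint_left.1 h hp.1.1 (he ▸ hp.1.2)⟩
  rw [swap, card_filter_add_card_filter_not, card_product]

lemma msign_mul_msign_swap {S T : Finset (Fin d)} (h : Disjoint S T) :
    msign S T * msign T S = (-1) ^ (#S * #T) := by
  rw [msign, msign, ← pow_add, card_filter_lt_add_card_filter_lt_swap h]

lemma msign_mul_self (S T : Finset (Fin d)) : msign S T * msign S T = 1 := by
  rw [msign, ← pow_add, Even.neg_one_pow ⟨_, rfl⟩]

lemma msign_eq_mul_msign_swap {S T : Finset (Fin d)} (h : Disjoint S T) :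
    msign S T = (-1) ^ (#S * #T) * msign T S := by
  rw [← msign_mul_msign_swap h, mul_assoc, msign_mul_self, mul_one]

/-- The Koszul sign of `amul` for exchanging two factors of exterior degrees
`#S₁ + #T₁` and `#S₂ + #T₂`. -/
lemma amul_sign_swap {S₁ S₂ T₁ T₂ : Finset (Fin d)} (hS : Disjoint S₁ S₂) (hT : Disjoint T₁ T₂) :
    msign S₁ S₂ * msign T₁ T₂ * (-1) ^ (#T₁ * #S₂) =
      (-1) ^ ((#S₁ + #T₁) * (#S₂ + #T₂)) *
        (msign S₂ S₁ * msign T₂ T₁ * (-1) ^ (#T₂ * #S₁)) := by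
  rw [msign_eq_mul_msign_swap hS, msign_eq_mul_msign_swap hT]
  have h : ((-1 : ℤ) ^ (#S₁ * #T₂)) ^ 2 = 1 := by rw [← pow_mul, Even.neg_one_pow ⟨_, mul_two _⟩]
  linear_combination (-(msign S₂ S₁ * msign T₂ T₁ * (-1) ^ (#S₁ * #S₂) * (-1) ^ (#S₂ * #T₁) *
    (-1) ^ (#T₁ * #T₂))) * h

lemma sum_powerset_congr_sdiff {α M : Type*} [DecidableEq α] [AddCommMonoid M] {s : Finset α}
    {f g : Finset α → M} (h : ∀ t ⊆ s, f t = g (s \ t)) :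
    ∑ t ∈ s.powerset, f t = ∑ t ∈ s.powerset, g t := by
  refine sum_nbij' (s \ ·) (s \ ·) (by simp) (by simp) ?_ ?_ fun t ht => h t (mem_powerset.1 ht)
  all_goals exact fun t ht => Finset.sdiff_sdiff_eq_self (mem_powerset.1 ht)

lemma amul_zero (f : A d k) : amul f 0 = 0 := by
  funext S T
  simp [amul]

lemma zero_amul (f : A d k) : amul 0 f = 0 := by
  funext S T
  simp [amul]

lemma amul_zsmul (c : ℤ) (f g : A d k) : amul f (c • g) = c • amul f g := by
  funext S T
  simp only [amul, Pi.smul_apply, smul_sum, mul_smul_comm, smul_comm c]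

lemma amul_comm_of_homog {p q : ℕ} {f g : A d k} (hf : Homog p f) (hg : Homog q g) :
    amul f g = (-1 : ℤ) ^ (p * q) • amul g f := by
  funext S T
  simp only [amul, Pi.smul_apply, smul_sum]
  refine sum_powerset_congr_sdiff fun S₁ hS₁ => sum_powerset_congr_sdiff fun T₁ hT₁ => ?_
  rw [Finset.sdiff_sdiff_eq_self hS₁, Finset.sdiff_sdiff_eq_self hT₁]
  by_cases hp : #S₁ + #T₁ = p
  · by_cases hq : #(S \ S₁) + #(T \ T₁) = q
    · rw [smul_smul, mul_comm (g _ _), ← hp, ← hq,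
        amul_sign_swap disjoint_sdiff disjoint_sdiff]
    · simp [hg _ _ hq]
  · simp [hf _ _ hp]

lemma dPsi_eq_zero_of_homog_zero {f : A d k} (hf : Homog 0 f) (i : Fin d) : dPsi i f = 0 := by
  funext S T
  unfold dPsi
  split_ifs with h
  · rfl
  · rw [hf _ _ (by rw [card_insert_of_notMem h]; omega), smul_zero]
    rfl

lemma homog_dPsi {p : ℕ} {f : A d k} (hf : Homog (p + 1) f) (i : Fin d) :
    Homog p (dPsi i f) := by
  intro S T hST
  unfold dPsi
  split_ifs with h
  · rfl
  · rw [hf _ _ (by rw [card_insert_of_notMem h]; omega), smul_zero]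

def christoffelPairing (Γc : Fin d → Fin d → Fin d → PS d k) (f g : A d k) : A d k :=
  ∑ i : Fin d, ∑ j : Fin d, ∑ k' : Fin d,
    amul (scalarA (Γc k' i j)) (amul (psiGen k') (amul (dPsi j f) (dPsi i g)))

section Pairing

variable (Γc : Fin d → Fin d → Fin d → PS d k)

lemma christoffelPairing_eq_zero_left {f : A d k} (hf : Homog 0 f) (g : A d k) :
    christoffelPairing Γc f g = 0 := by
  simp [christoffelPairing, dPsi_eq_zero_of_homog_zero hf, amul_zero, zero_amul]

lemma christoffelPairing_eq_zero_right (f : A d k) {g : A d k} (hg : Homog 0 g) :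
    christoffelPairing Γc f g = 0 := by
  simp [christoffelPairing, dPsi_eq_zero_of_homog_zero hg, amul_zero]

lemma christoffelPairing_comm {p q : ℕ} {f g : A d k} (hsym : GSymm Γc)
    (hf : Homog (p + 1) f) (hg : Homog (q + 1) g) :
    christoffelPairing Γc g f = (-1 : ℤ) ^ (q * p) • christoffelPairing Γc f g := by
  rw [christoffelPairing, sum_comm]
  simp only [christoffelPairing, smul_sum]
  refine sum_congr rfl fun i _ => sum_congr rfl fun j _ => sum_congr rfl fun k' _ => ?_
  rw [hsym j i k', amul_comm_of_homog (homog_dPsi hg i) (homog_dPsi hf j), amul_zsmul,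
    amul_zsmul]

end Pairing

theorem statement13_general (d : ℕ) (k : Type*) [CommRing k]
    (Γc : Fin d → Fin d → Fin d → PS d k) (hsym : GSymm Γc)
    (m n : ℕ) (f g : A d k) (hf : Homog m f) (hg : Homog n g) :
    ((-1 : ℤ) ^ m) •
        (∑ i : Fin d, ∑ j : Fin d, ∑ k' : Fin d,
          amul (scalarA (Γc k' i j))
            (amul (psiGen k') (amul (dPsi j f) (dPsi i g)))) +
      ((-1 : ℤ) ^ (m * n + n)) •
        (∑ i : Fin d, ∑ j : Fin d, ∑ k' : Fin d,
          amul (scalarA (Γc k' i j))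
            (amul (psiGen k') (amul (dPsi j g) (dPsi i f)))) = 0 := by
  change (-1 : ℤ) ^ m • christoffelPairing Γc f g +
    (-1 : ℤ) ^ (m * n + n) • christoffelPairing Γc g f = 0
  rcases m with _ | p
  · simp [christoffelPairing_eq_zero_left Γc hf, christoffelPairing_eq_zero_right Γc _ hf]
  rcases n with _ | q
  · simp [christoffelPairing_eq_zero_left Γc hg, christoffelPairing_eq_zero_right Γc _ hg]
  have hsign : (-1 : ℤ) ^ ((p + 1) * (q + 1) + (q + 1) + q * p) = (-1) ^ p := by
    rw [show (p + 1) * (q + 1) + (q + 1) + q * p = p + 2 * (p * q + q + 1) by ring, pow_add,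
      pow_mul]
    simp
  rw [christoffelPairing_comm Γc hsym hf hg, smul_smul, ← pow_add, hsign, ← add_smul, pow_succ]
  simp

/-- vanishing of the correction term `S`: for `Γ^k_{ij}` symmetric in the
lower indices and homogeneous `f`, `g`,
`(−1)^{|f|} Σ Γ^k_{ij} ψ_k (∂f/∂ψ_j)(∂g/∂ψ_i) + (−1)^{|f||g|+|g|} Σ Γ^k_{ij} ψ_k (∂g/∂ψ_j)(∂f/∂ψ_i) = 0`. -/
theorem statement13 (d : ℕ) (hd : 1 ≤ d) (k : Type*) [CommRing k] [Algebra ℚ k]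
    (Γc : Fin d → Fin d → Fin d → PS d k) (hx : XOnly Γc) (hsym : GSymm Γc)
    (m n : ℕ) (f g : A d k) (hf : Homog m f) (hg : Homog n g) :
    ((-1 : ℤ) ^ m) •
        (∑ i : Fin d, ∑ j : Fin d, ∑ k' : Fin d,
          amul (scalarA (Γc k' i j))
            (amul (psiGen k') (amul (dPsi j f) (dPsi i g)))) +
      ((-1 : ℤ) ^ (m * n + n)) •
        (∑ i : Fin d, ∑ j : Fin d, ∑ k' : Fin d,
          amul (scalarA (Γc k' i j))
            (amul (psiGen k') (amul (dPsi j g) (dPsi i f)))) = 0 :=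
  statement13_general d k Γc hsym m n f g hf hg

end Glob
end
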